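/- Non-identifiability of the third tensor factor: Let r ≥ 1 and d = 2r. Define A¹ = A² = A³ ∈ ℝ^{d×r} as the matrix whose top r×r block is the identity and whose remaining rows are zero; let Y ∈ ℝ^d have all coordinates equal to 1/√d; let Z₁ ∈ ℝ^d have its first r coordinates equal to 1/√r and the rest zero; let Z₂ ∈ ℝ^d have all coordinates 1/√d; let C³ ∈ ℝ^{(r+1)×r} be the lower bidiagonal matrix with entries 1/√2 on the main diagonal and on the diagonal immediately below it, and B³ ∈ ℝ^{d×r} the matrix whose top (r+1)×r block is C³ and whose remaining rows are zero. Then for every X ∈ ℝ^d, Σ_{s=1}^r (XᵀA¹_s)(YᵀA²_s)(Z₁ᵀA³_s) = Σ_{s=1}^r (XᵀA¹_s)(YᵀA²_s)(Z₂ᵀB³_s) = (√2/d)·Σ_{i=1}^r X_i; moreover ‖A³ − B³‖_F² = r((1 − 1/√2)² + 1/2) ≥ r/2 and ‖A³⊥ᵀ B³‖_op = 1/√2, where A³⊥ is an orthonormal basis of the orthogonal complement of the column span of A³. Hence two rank-r tensors with identical first two factors and identical observed task feature produce identical noiseless responses while their third factors are far apart in both Frobenius norm and sin-θ distance. -/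

import Mathlib

open MeasureTheory ProbabilityTheory Matrix Real

noncomputable section

/-- Euclidean (ℓ²) norm of a finite family of reals. -/
def l2norm {ι : Type*} [Fintype ι] (x : ι → ℝ) : ℝ := Real.sqrt (∑ i, x i ^ 2)

/-- Frobenius norm of a matrix. -/
def fnorm {ι κ : Type*} [Fintype ι] [Fintype κ] (M : Matrix ι κ ℝ) : ℝ :=
  Real.sqrt (∑ i, ∑ j, M i j ^ 2)

/-- Operator (spectral) norm of a matrix. -/
def opNorm {ι κ : Type*} [Fintype ι] [Fintype κ] (M : Matrix ι κ ℝ) : ℝ :=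
  sSup {t | ∃ x : κ → ℝ, l2norm x = 1 ∧ t = l2norm (M.mulVec x)}

/-!
Take `A` to be the inclusion of the first `r` coordinates. The responses only see the third factor
through the column products `Zᵀ C_s`, and these coincide: `Yᵀ A_s · Z₁ᵀ A_s = (1/√d)(1/√r)` and
`Yᵀ A_s · Z₂ᵀ B³_s = (1/√d)(√2/√d)` both equal `√2/d`, because every column of `B³` has two
entries `1/√2`. On the other hand every column of `A - B³` carries the sub-diagonal entry `-1/√2`,
and `1 - A Aᵀ` erases all rows of `B³` except row `r`, leaving the single entry `1/√2` at
`(r, r - 1)`.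
-/

namespace Fin

theorem sum_ite_val_eq {M : Type*} [AddCommMonoid M] {d : ℕ} (n : ℕ) (hn : n < d)
    (f : Fin d → M) :
    ∑ i : Fin d, (if (i : ℕ) = n then f i else 0) = f ⟨n, hn⟩ := by
  simp [← Fin.ext_iff (b := ⟨n, hn⟩)]

theorem sum_ite_val_eq_add_ite_val_eq_succ {M : Type*} [AddCommMonoid M] {d : ℕ} (n : ℕ)
    (hn : n + 1 < d) (f g : Fin d → M) :
    ∑ k : Fin d, ((if (k : ℕ) = n then f k else 0) + (if (k : ℕ) = n + 1 then g k else 0)) =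
      f ⟨n, by omega⟩ + g ⟨n + 1, hn⟩ := by
  rw [Finset.sum_add_distrib, sum_ite_val_eq, sum_ite_val_eq]

theorem sum_castLE_eq_sum_ite_lt {M : Type*} [AddCommMonoid M] {r d : ℕ} (h : r ≤ d)
    (f : Fin d → M) :
    ∑ s : Fin r, f (Fin.castLE h s) = ∑ i : Fin d, if (i : ℕ) < r then f i else 0 := by
  have hrange : Finset.univ.filter (fun i : Fin d => (i : ℕ) < r) =
      Finset.univ.map (Fin.castLEEmb h) := by
    ext i
    simp only [Finset.mem_filter, Finset.mem_univ, true_and, Finset.mem_map, Fin.castLEEmb_apply]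
    exact ⟨fun hi => ⟨⟨i, hi⟩, rfl⟩, by rintro ⟨s, rfl⟩; exact s.2⟩
  rw [← Finset.sum_filter, hrange, Finset.sum_map]
  rfl

end Fin

theorem l2norm_pi_single {ι : Type*} [Fintype ι] [DecidableEq ι] (i : ι) (a : ℝ) :
    l2norm (Pi.single i a) = |a| := by
  simp [l2norm, Pi.single_apply, ite_pow, Real.sqrt_sq_eq_abs]

theorem abs_apply_le_l2norm {ι : Type*} [Fintype ι] (x : ι → ℝ) (i : ι) :
    |x i| ≤ l2norm x := by
  rw [← Real.sqrt_sq_eq_abs]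
  exact Real.sqrt_le_sqrt (Finset.single_le_sum (fun k _ => sq_nonneg (x k)) (Finset.mem_univ i))

theorem opNorm_single {ι κ : Type*} [Fintype ι] [Fintype κ] [DecidableEq ι] [DecidableEq κ]
    (i : ι) (j : κ) (c : ℝ) : opNorm (Matrix.single i j c) = |c| := by
  have hmulVec : ∀ x, l2norm ((Matrix.single i j c).mulVec x) = |c| * |x j| := by
    intro x
    rw [single_mulVec, ← Pi.single, l2norm_pi_single, abs_mul]
  refine IsGreatest.csSup_eq ⟨⟨Pi.single j 1, by simp [l2norm_pi_single], ?_⟩, ?_⟩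
  · rw [hmulVec]; simp
  · rintro t ⟨x, hx, rfl⟩
    rw [hmulVec]
    exact mul_le_of_le_one_right (abs_nonneg c) (hx ▸ abs_apply_le_l2norm x j)

theorem fnorm_sq {ι κ : Type*} [Fintype ι] [Fintype κ] (M : Matrix ι κ ℝ) :
    fnorm M ^ 2 = ∑ i, ∑ j, M i j ^ 2 :=
  Real.sq_sqrt (by positivity)

section EmbeddingMatrix

variable {R : Type*} [CommRing R] {r d : ℕ} {A : Matrix (Fin d) (Fin r) R}

theorem sum_mul_eq_of_eq_ite (hA : ∀ i s, A i s = if (i : ℕ) = (s : ℕ) then 1 else 0)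
    (h : r ≤ d) (X : Fin d → R) (s : Fin r) : ∑ i, X i * A i s = X (Fin.castLE h s) := by
  simp only [hA, mul_ite, mul_one, mul_zero]
  exact Fin.sum_ite_val_eq s (by omega) X

theorem mul_apply_of_eq_ite {κ : Type*}
    (hA : ∀ i s, A i s = if (i : ℕ) = (s : ℕ) then 1 else 0)
    (N : Matrix (Fin r) κ R) (i : Fin d) (k : κ) :
    (A * N) i k = if h : (i : ℕ) < r then N ⟨i, h⟩ k else 0 := by
  simp only [mul_apply, hA, ite_mul, one_mul, zero_mul, eq_comm (a := (i : ℕ))]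
  split_ifs with h
  · exact Fin.sum_ite_val_eq i h fun s => N s k
  · exact Finset.sum_eq_zero fun s _ => if_neg (by omega)

theorem transpose_mul_apply_of_eq_ite {κ : Type*}
    (hA : ∀ i s, A i s = if (i : ℕ) = (s : ℕ) then 1 else 0) (h : r ≤ d)
    (N : Matrix (Fin d) κ R) (s : Fin r) (k : κ) : (Aᵀ * N) s k = N (Fin.castLE h s) k := by
  simp only [mul_apply, transpose_apply, mul_comm (A _ s)]
  exact sum_mul_eq_of_eq_ite hA h (fun i => N i k) s

theorem one_sub_mul_transpose_mul_apply {κ : Type*}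
    (hA : ∀ i s, A i s = if (i : ℕ) = (s : ℕ) then 1 else 0) (h : r ≤ d)
    (N : Matrix (Fin d) κ R) (i : Fin d) (k : κ) :
    (((1 : Matrix (Fin d) (Fin d) R) - A * Aᵀ) * N) i k =
      if (i : ℕ) < r then 0 else N i k := by
  rw [Matrix.sub_mul, Matrix.one_mul, Matrix.mul_assoc, Matrix.sub_apply,
    mul_apply_of_eq_ite hA]
  split_ifs with hi
  · rw [transpose_mul_apply_of_eq_ite hA h, sub_eq_zero]
    rfl
  · exact sub_zero _

theorem sum_mul_mul_eq_of_eq_ite (hA : ∀ i s, A i s = if (i : ℕ) = (s : ℕ) then 1 else 0)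
    (h : r ≤ d) (X : Fin d → R) {u v : Fin r → R} {c : R} (huv : ∀ s, u s * v s = c) :
    ∑ s, (∑ i, X i * A i s) * u s * v s = c * ∑ i : Fin d, if (i : ℕ) < r then X i else 0 := by
  simp only [mul_assoc, huv, sum_mul_eq_of_eq_ite hA h]
  rw [← Finset.sum_mul, Fin.sum_castLE_eq_sum_ite_lt, mul_comm]

variable {B : Matrix (Fin d) (Fin r) R} {c : R}

theorem sum_mul_eq_of_eq_ite_or_succ
    (hB : ∀ i s, B i s = if (i : ℕ) = (s : ℕ) ∨ (i : ℕ) = (s : ℕ) + 1 then c else 0)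
    (X : Fin d → R) (s : Fin r) (hs : (s : ℕ) + 1 < d) :
    ∑ k, X k * B k s = X ⟨s, by omega⟩ * c + X ⟨s + 1, hs⟩ * c := by
  rw [← Fin.sum_ite_val_eq_add_ite_val_eq_succ s hs (fun k => X k * c) (fun k => X k * c)]
  refine Finset.sum_congr rfl fun k _ => ?_
  rw [hB]
  split_ifs <;> first | omega | simp

theorem one_sub_mul_transpose_mul_eq_single
    (hA : ∀ i s, A i s = if (i : ℕ) = (s : ℕ) then 1 else 0)
    (hB : ∀ i s, B i s = if (i : ℕ) = (s : ℕ) ∨ (i : ℕ) = (s : ℕ) + 1 then c else 0)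
    (hr : 1 ≤ r) (hrd : r < d) :
    (1 - A * Aᵀ) * B = Matrix.single ⟨r, hrd⟩ ⟨r - 1, by omega⟩ c := by
  ext i s
  rw [one_sub_mul_transpose_mul_apply hA hrd.le, hB, single_apply]
  simp only [Fin.ext_iff]
  have hs := s.isLt
  split_ifs <;> first | rfl | omega

end EmbeddingMatrix

theorem fnorm_sub_sq_of_eq_ite {r d : ℕ} {A B : Matrix (Fin d) (Fin r) ℝ} {c : ℝ}
    (hA : ∀ i s, A i s = if (i : ℕ) = (s : ℕ) then 1 else 0)
    (hB : ∀ i s, B i s = if (i : ℕ) = (s : ℕ) ∨ (i : ℕ) = (s : ℕ) + 1 then c else 0)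
    (hrd : r < d) :
    fnorm (A - B) ^ 2 = r * ((1 - c) ^ 2 + c ^ 2) := by
  have hcol : ∀ s : Fin r, ∑ i, (A - B) i s ^ 2 = (1 - c) ^ 2 + c ^ 2 := by
    intro s
    have hs : (s : ℕ) + 1 < d := by omega
    rw [← Fin.sum_ite_val_eq_add_ite_val_eq_succ s hs (fun _ => (1 - c) ^ 2) (fun _ => c ^ 2)]
    refine Finset.sum_congr rfl fun i _ => ?_
    rw [Matrix.sub_apply, hA, hB]
    split_ifs <;> first | omega | ring
  rw [fnorm_sq, Finset.sum_comm]
  simp only [hcol, Finset.sum_const, Finset.card_univ, Fintype.card_fin, nsmul_eq_mul]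

/-- Since `1 - A Aᵀ = A⊥ A⊥ᵀ`, the operator norm of `(1 - A Aᵀ) B3` is the sin-θ distance
`‖A⊥ᵀ B3‖_op`. -/
theorem nonidentifiability_of_third_factor (r : ℕ) (hr : 1 ≤ r) :
    ∀ (d : ℕ), d = 2 * r →
    ∀ (A B3 : Matrix (Fin d) (Fin r) ℝ) (Y Z₁ Z₂ : Fin d → ℝ),
    (∀ i s, A i s = if (i : ℕ) = (s : ℕ) then 1 else 0) →
    (∀ i, Y i = 1 / Real.sqrt d) →
    (∀ i, Z₁ i = if (i : ℕ) < r then 1 / Real.sqrt r else 0) →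
    (∀ i, Z₂ i = 1 / Real.sqrt d) →
    (∀ i s, B3 i s =
      if (i : ℕ) = (s : ℕ) ∨ (i : ℕ) = (s : ℕ) + 1 then 1 / Real.sqrt 2 else 0) →
    (∀ X : Fin d → ℝ,
      (∑ s : Fin r, (∑ i, X i * A i s) * (∑ j, Y j * A j s) * (∑ k, Z₁ k * A k s)
          = (Real.sqrt 2 / d) * ∑ i : Fin d, (if (i : ℕ) < r then X i else 0)) ∧
      (∑ s : Fin r, (∑ i, X i * A i s) * (∑ j, Y j * A j s) * (∑ k, Z₂ k * B3 k s)
          = (Real.sqrt 2 / d) * ∑ i : Fin d, (if (i : ℕ) < r then X i else 0))) ∧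
    fnorm (A - B3) ^ 2 = r * ((1 - 1 / Real.sqrt 2) ^ 2 + 1 / 2) ∧
    (r : ℝ) / 2 ≤ fnorm (A - B3) ^ 2 ∧
    opNorm ((1 - A * Aᵀ) * B3) = 1 / Real.sqrt 2 := by
  intro d hd A B3 Y Z₁ Z₂ hA hY hZ₁ hZ₂ hB3
  subst hd
  have hrd : r < 2 * r := by omega
  have hr0 : (0 : ℝ) < r := by exact_mod_cast hr
  have hsqrt2 : √2 ^ 2 = (2 : ℝ) := Real.sq_sqrt zero_le_two
  have hsqrtr : √r ^ 2 = (r : ℝ) := Real.sq_sqrt hr0.le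
  have hsqrtd : √((2 * r : ℕ) : ℝ) = √2 * √r := by
    push_cast
    exact Real.sqrt_mul zero_le_two _
  have hYcol : ∀ s, ∑ j, Y j * A j s = 1 / (√2 * √r) := fun s => by
    rw [sum_mul_eq_of_eq_ite hA hrd.le, hY, hsqrtd]
  have hfrob := fnorm_sub_sq_of_eq_ite hA hB3 hrd
  have hc : (1 / √2 : ℝ) ^ 2 = 1 / 2 := by rw [div_pow, one_pow, hsqrt2]
  refine ⟨fun X => ⟨sum_mul_mul_eq_of_eq_ite hA hrd.le X fun s => ?_,
    sum_mul_mul_eq_of_eq_ite hA hrd.le X fun s => ?_⟩, by rw [hfrob, hc], ?_, ?_⟩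
  · rw [hYcol, sum_mul_eq_of_eq_ite hA hrd.le, hZ₁, if_pos (by simp)]
    push_cast
    field_simp
    rw [hsqrt2, hsqrtr]
  · rw [hYcol, sum_mul_eq_of_eq_ite_or_succ hB3 _ _ (by omega), hZ₂, hZ₂, hsqrtd]
    push_cast
    field_simp
    rw [hsqrtr, show √2 ^ 4 = (√2 ^ 2) ^ 2 by ring, hsqrt2]
    ring
  · rw [hfrob, hc]
    nlinarith [sq_nonneg (1 - 1 / √2)]
  · rw [one_sub_mul_transpose_mul_eq_single hA hB3 hr hrd, opNorm_single,
      abs_of_pos (by positivity)]
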